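/- For every odd n ≥ 3, every tiling of the 6×n rectangle by T-tetrominoes and monominoes uses at least 2 monominoes, and there exists such a tiling using exactly 2; i.e., M(6,n) = 2 for odd n ≥ 3. -/

import Mathlib

/-- The four rotations of the T-tetromino, as sets of cells (row, col). -/
def tShapes : Finset (Finset (ℤ × ℤ)) :=
  { {(0,0),(0,1),(0,2),(1,1)},
    {(0,0),(0,1),(0,2),(-1,1)},
    {(0,0),(1,0),(2,0),(1,1)},
    {(0,0),(1,0),(2,0),(1,-1)} }

/-- A placed T-tetromino: a translate of one of the four rotations. -/
def IsTPlacement (p : Finset (ℤ × ℤ)) : Prop :=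
  ∃ s ∈ tShapes, ∃ t : ℤ × ℤ, p = s.image (· + t)

/-- The m×n rectangle of cells. -/
noncomputable def rectCells (m n : ℕ) : Finset (ℤ × ℤ) :=
  (Finset.Ico 0 (m:ℤ)) ×ˢ (Finset.Ico 0 (n:ℤ))

/-- A tiling of a region `R` by T-tetrominoes and single-cell monominoes. -/
def IsTiling (P : Finset (Finset (ℤ × ℤ))) (R : Finset (ℤ × ℤ)) : Prop :=
  (∀ p ∈ P, IsTPlacement p ∨ ∃ c, p = {c}) ∧
  (∀ p ∈ P, ∀ q ∈ P, p ≠ q → Disjoint p q) ∧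
  P.biUnion id = R

/-- A tiling of a region `R` by T-tetrominoes alone. -/
def IsTTiling (P : Finset (Finset (ℤ × ℤ))) (R : Finset (ℤ × ℤ)) : Prop :=
  (∀ p ∈ P, IsTPlacement p) ∧
  (∀ p ∈ P, ∀ q ∈ P, p ≠ q → Disjoint p q) ∧
  P.biUnion id = R

/-- The number of monominoes (single-cell pieces) used in a tiling. -/
def monoCount (P : Finset (Finset (ℤ × ℤ))) : ℕ :=
  (P.filter (fun p => p.card = 1)).card

/-- The gap number `M(m,n)`: the least number of monominoes in a tiling of the
m×n rectangle by T-tetrominoes and monominoes. -/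
noncomputable def gapNumber (m n : ℕ) : ℕ :=
  sInf {g | ∃ P, IsTiling P (rectCells m n) ∧ monoCount P = g}


/-
Every T-tetromino covers four cells, so a tiling of a region with `c` cells uses `≡ c (mod 4)`
monominoes, and `6n ≡ 2 (mod 4)` for odd `n`. Conversely, the `6 × n` rectangle minus two cells
is tiled from left to right: a width-4 block is a `6 × 4` rectangle whose first-column cells `X`
are moved to column 4, so that consecutive blocks interlock, and a small cap closes the row.
With `|X| = 1` this gives `n = 4k + 3`; with `|X| = 3` and a width-3 block in front, `n = 4k + 5`.
-/

open Finset

def shift (t : ℤ × ℤ) (s : Finset (ℤ × ℤ)) : Finset (ℤ × ℤ) := s.image (· + t)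

@[simp]
lemma mem_shift {t a : ℤ × ℤ} {s : Finset (ℤ × ℤ)} : a ∈ shift t s ↔ a - t ∈ s := by
  simp [shift, sub_eq_add_neg]

lemma shift_shift (t u : ℤ × ℤ) (s : Finset (ℤ × ℤ)) :
    shift t (shift u s) = shift (u + t) s := by
  ext a
  simp [sub_sub, add_comm]

@[simp]
lemma mem_rectCells {m n : ℕ} {c : ℤ × ℤ} :
    c ∈ rectCells m n ↔ 0 ≤ c.1 ∧ c.1 < m ∧ 0 ≤ c.2 ∧ c.2 < n := by
  simp [rectCells, and_assoc]

lemma card_rectCells (m n : ℕ) : (rectCells m n).card = m * n := by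
  simp [rectCells]

lemma IsTPlacement.card_eq {p : Finset (ℤ × ℤ)} (hp : IsTPlacement p) : p.card = 4 := by
  obtain ⟨s, hs, t, rfl⟩ := hp
  rw [card_image_of_injective _ (add_left_injective t)]
  revert s; decide

lemma IsTPlacement.shift {p : Finset (ℤ × ℤ)} (hp : IsTPlacement p) (t : ℤ × ℤ) :
    IsTPlacement (shift t p) := by
  obtain ⟨s, hs, u, rfl⟩ := hp
  exact ⟨s, hs, u + t, shift_shift t u s⟩

lemma monoCount_mod_four {P : Finset (Finset (ℤ × ℤ))} {R : Finset (ℤ × ℤ)}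
    (hP : IsTiling P R) : monoCount P % 4 = R.card % 4 := by
  obtain ⟨hpieces, hdisj, hcover⟩ := hP
  have hsum : ∑ p ∈ P, p.card = R.card := by
    rw [← hcover]
    exact (card_biUnion (t := id) hdisj).symm
  have htetro : ∑ p ∈ P with ¬p.card = 1, p.card = 4 * #{p ∈ P | ¬p.card = 1} := by
    rw [mul_comm, ← smul_eq_mul, ← sum_const]
    refine sum_congr rfl fun p hp => ?_
    obtain ⟨hpP, hp1⟩ := mem_filter.1 hp
    rcases hpieces p hpP with hT | ⟨c, rfl⟩
    · exact hT.card_eq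
    · simp at hp1
  have hmono : ∑ p ∈ P with p.card = 1, p.card = monoCount P := by
    rw [monoCount, card_eq_sum_ones]
    exact sum_congr rfl fun p hp => (mem_filter.1 hp).2
  rw [← hsum, ← sum_filter_add_sum_filter_not P (fun p => p.card = 1), hmono, htetro]
  omega

def TTileable (R : Finset (ℤ × ℤ)) : Prop := ∃ P, IsTTiling P R

lemma IsTTiling.subset {P : Finset (Finset (ℤ × ℤ))} {R : Finset (ℤ × ℤ)} (hP : IsTTiling P R)
    {p : Finset (ℤ × ℤ)} (hp : p ∈ P) : p ⊆ R :=
  hP.2.2 ▸ subset_biUnion_of_mem id hp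

lemma TTileable.union {R S : Finset (ℤ × ℤ)} (hR : TTileable R) (hS : TTileable S)
    (hRS : Disjoint R S) : TTileable (R ∪ S) := by
  obtain ⟨P, hP⟩ := hR
  obtain ⟨Q, hQ⟩ := hS
  refine ⟨P ∪ Q, ?_, ?_, by rw [union_biUnion, hP.2.2, hQ.2.2]⟩
  · intro p hp
    rcases mem_union.1 hp with hp | hp
    exacts [hP.1 p hp, hQ.1 p hp]
  · intro p hp q hq hpq
    rcases mem_union.1 hp with hp | hp <;> rcases mem_union.1 hq with hq | hq
    · exact hP.2.1 p hp q hq hpq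
    · exact hRS.mono (hP.subset hp) (hQ.subset hq)
    · exact hRS.symm.mono (hQ.subset hp) (hP.subset hq)
    · exact hQ.2.1 p hp q hq hpq

lemma TTileable.shift {R : Finset (ℤ × ℤ)} (hR : TTileable R) (t : ℤ × ℤ) :
    TTileable (shift t R) := by
  obtain ⟨P, hpieces, hdisj, hcover⟩ := hR
  refine ⟨P.image (_root_.shift t), ?_, ?_, ?_⟩
  · simp only [mem_image, forall_exists_index, and_imp, forall_apply_eq_imp_iff₂]
    exact fun p hp => (hpieces p hp).shift t
  · simp only [mem_image, forall_exists_index, and_imp, forall_apply_eq_imp_iff₂]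
    intro p hp q hq hpq
    exact (disjoint_image (add_left_injective t)).2
      (hdisj p hp q hq fun h => hpq (h ▸ rfl))
  · rw [← hcover, image_biUnion]
    exact biUnion_image.symm

def placeShapes (L : List (Finset (ℤ × ℤ) × (ℤ × ℤ))) : Finset (Finset (ℤ × ℤ)) :=
  (L.map fun x => shift x.2 x.1).toFinset

lemma tTileable_of_placeShapes {R : Finset (ℤ × ℤ)} (L : List (Finset (ℤ × ℤ) × (ℤ × ℤ)))
    (hshapes : ∀ x ∈ L, x.1 ∈ tShapes)
    (hdisj : ∀ p ∈ placeShapes L, ∀ q ∈ placeShapes L, p ≠ q → Disjoint p q)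
    (hcover : (placeShapes L).biUnion id = R) : TTileable R := by
  refine ⟨_, ?_, hdisj, hcover⟩
  simp only [placeShapes, List.mem_toFinset, List.mem_map]
  rintro _ ⟨x, hx, rfl⟩
  exact ⟨x.1, hshapes x hx, x.2, rfl⟩

lemma exists_isTiling_monoCount_eq_card {R H : Finset (ℤ × ℤ)} (hH : H ⊆ R)
    (hT : TTileable (R \ H)) : ∃ P, IsTiling P R ∧ monoCount P = H.card := by
  obtain ⟨P, hP⟩ := hT
  have hPH : ∀ p ∈ P, ∀ c ∈ H, Disjoint p {c} := fun p hp c hc =>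
    disjoint_singleton_right.2 fun hcp => (mem_sdiff.1 (hP.subset hp hcp)).2 hc
  refine ⟨P ∪ H.image singleton, ⟨?_, ?_, ?_⟩, ?_⟩
  · simp only [mem_union, mem_image]
    rintro p (hp | ⟨c, -, rfl⟩)
    exacts [Or.inl (hP.1 p hp), Or.inr ⟨c, rfl⟩]
  · simp only [mem_union, mem_image]
    rintro p (hp | ⟨c, hc, rfl⟩) q (hq | ⟨d, hd, rfl⟩) hpq
    · exact hP.2.1 p hp q hq hpq
    · exact hPH p hp d hd
    · exact (hPH q hq c hc).symm
    · exact disjoint_singleton.2 fun hcd => hpq (hcd ▸ rfl)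
  · rw [union_biUnion, hP.2.2, image_biUnion]
    simp [sdiff_union_of_subset hH]
  · have hmono : {p ∈ P ∪ H.image singleton | p.card = 1} = H.image singleton := by
      ext p
      simp only [mem_filter, mem_union, mem_image]
      constructor
      · rintro ⟨hp | hp, hcard⟩
        · rw [(hP.1 p hp).card_eq] at hcard; contradiction
        · exact hp
      · rintro ⟨c, hc, rfl⟩
        exact ⟨Or.inr ⟨c, hc, rfl⟩, card_singleton c⟩
    rw [monoCount, hmono, card_image_of_injective _ singleton_injective]

/-- The `m × w` rectangle with the cells `Y` removed and the cells `X` of its first column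
copied to column `w`. For `Y = X` its translates by multiples of `(0, w)` interlock. -/
noncomputable def jaggedRect (m w : ℕ) (Y X : Finset (ℤ × ℤ)) : Finset (ℤ × ℤ) :=
  rectCells m w \ Y ∪ shift (0, (w : ℤ)) X

lemma disjoint_jaggedRect_shift (m w N : ℕ) (Y X : Finset (ℤ × ℤ)) (h : ℤ × ℤ) :
    Disjoint (jaggedRect m w Y X) (shift (0, (w : ℤ)) (rectCells m N \ (X ∪ {h}))) := by
  rw [jaggedRect, disjoint_union_left]
  constructor
  · rw [disjoint_left]
    rintro ⟨a, b⟩ h1 h2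
    simp only [mem_sdiff, mem_rectCells, mem_shift, Prod.mk_sub_mk, sub_zero] at h1 h2
    omega
  · exact (disjoint_image (add_left_injective _)).2 (disjoint_sdiff.mono_left subset_union_left)

lemma rectCells_add_sdiff_eq {m w N : ℕ} {X Y : Finset (ℤ × ℤ)} {h : ℤ × ℤ}
    (hX : X ⊆ rectCells m 1) (hY : Y ⊆ rectCells m w) (hh : h ∈ rectCells m N) (hhX : h ∉ X) :
    rectCells m (w + N) \ (Y ∪ {h + (0, (w : ℤ))}) =
      jaggedRect m w Y X ∪ shift (0, (w : ℤ)) (rectCells m N \ (X ∪ {h})) := by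
  obtain ⟨h₁, h₂⟩ := h
  ext ⟨a, b⟩
  have hXc : (a, b - w) ∈ X → _ := fun hx => mem_rectCells.1 (hX hx)
  have hYc : (a, b) ∈ Y → _ := fun hy => mem_rectCells.1 (hY hy)
  have hXh : (a, b - w) ∈ X → a = h₁ → b - w ≠ h₂ := by
    rintro hx rfl rfl
    exact hhX hx
  simp only [mem_rectCells] at hh
  by_cases hy : (a, b) ∈ Y <;> by_cases hx : (a, b - w) ∈ X <;>
    simp_all [jaggedRect] <;> omega

lemma TTileable.prepend_jaggedRect {m w N : ℕ} {X Y : Finset (ℤ × ℤ)} {h : ℤ × ℤ}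
    (hX : X ⊆ rectCells m 1) (hY : Y ⊆ rectCells m w) (hh : h ∈ rectCells m N) (hhX : h ∉ X)
    (hblock : TTileable (jaggedRect m w Y X)) (hrest : TTileable (rectCells m N \ (X ∪ {h}))) :
    TTileable (rectCells m (w + N) \ (Y ∪ {h + (0, (w : ℤ))})) := by
  rw [rectCells_add_sdiff_eq hX hY hh hhX]
  exact hblock.union (hrest.shift _) (disjoint_jaggedRect_shift m w N Y X h)

lemma TTileable.prepend_jaggedRect_iterate {m w N : ℕ} {X : Finset (ℤ × ℤ)} {h : ℤ × ℤ}
    (hw : 1 ≤ w) (hX : X ⊆ rectCells m 1) (hh : h ∈ rectCells m N) (hhX : h ∉ X)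
    (hblock : TTileable (jaggedRect m w X X)) (hrest : TTileable (rectCells m N \ (X ∪ {h})))
    (k : ℕ) : TTileable (rectCells m (w * k + N) \ (X ∪ {h + (0, (w : ℤ) * k)})) := by
  obtain ⟨h₁, h₂⟩ := h
  simp only [mem_rectCells] at hh
  have hXw : X ⊆ rectCells m w := fun c hc => by
    have := mem_rectCells.1 (hX hc)
    simp only [mem_rectCells]
    omega
  induction k with
  | zero => simpa using hrest
  | succ k ih =>
    have hhk : (h₁, h₂ + w * k) ∈ rectCells m (w * k + N) := by
      simp only [mem_rectCells]
      push_cast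
      have : (0 : ℤ) ≤ w * k := by positivity
      omega
    have hhkX : (h₁, h₂ + w * k) ∉ X := by
      rcases Nat.eq_zero_or_pos k with rfl | hk
      · simpa using hhX
      · intro hmem
        have := mem_rectCells.1 (hX hmem)
        have : (1 : ℤ) ≤ w * k := by exact_mod_cast Nat.mul_pos hw hk
        omega
    simp only [Prod.mk_add_mk, add_zero] at ih
    convert TTileable.prepend_jaggedRect hX hXw hhk hhkX hblock ih using 3
    · ring
    · simp only [Prod.ext_iff, singleton_inj, Prod.fst_add, Prod.snd_add, add_zero, true_and]
      push_cast
      ring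

def tDown : Finset (ℤ × ℤ) := {(0,0),(0,1),(0,2),(1,1)}
def tUp : Finset (ℤ × ℤ) := {(0,0),(0,1),(0,2),(-1,1)}
def tRight : Finset (ℤ × ℤ) := {(0,0),(1,0),(2,0),(1,1)}
def tLeft : Finset (ℤ × ℤ) := {(0,0),(1,0),(2,0),(1,-1)}

lemma tTileable_six_four_mul_add_three (k : ℕ) :
    TTileable (rectCells 6 (4 * k + 3) \ {(4, 0), (1, 4 * (k : ℤ) + 2)}) := by
  have hblock : TTileable (jaggedRect 6 4 {(4, 0)} {(4, 0)}) :=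
    tTileable_of_placeShapes [(tDown, (0,0)), (tLeft, (0,3)), (tRight, (1,0)), (tUp, (3,1)),
      (tUp, (5,0)), (tDown, (4,2))] (by decide) (by decide) (by decide)
  have hcap : TTileable (rectCells 6 3 \ ({(4, 0)} ∪ {(1, 2)})) :=
    tTileable_of_placeShapes [(tDown, (0,0)), (tRight, (1,0)), (tLeft, (2,2)), (tUp, (5,0))]
      (by decide) (by decide) (by decide)
  convert TTileable.prepend_jaggedRect_iterate (by norm_num) (by decide) (by decide) (by decide)
    hblock hcap k using 3
  simp [add_comm]

lemma tTileable_six_four_mul_add_five (k : ℕ) :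
    TTileable (rectCells 6 (4 * k + 5) \ {(2, 1), (2, 4 * (k : ℤ) + 3)}) := by
  have hblock : TTileable (jaggedRect 6 4 {(0, 0), (3, 0), (5, 0)} {(0, 0), (3, 0), (5, 0)}) :=
    tTileable_of_placeShapes [(tUp, (1,0)), (tDown, (0,2)), (tDown, (2,0)), (tUp, (3,2)),
      (tDown, (4,0)), (tUp, (5,2))] (by decide) (by decide) (by decide)
  have hcap : TTileable (rectCells 6 2 \ ({(0, 0), (3, 0), (5, 0)} ∪ {(2, 0)})) :=
    tTileable_of_placeShapes [(tLeft, (0,1)), (tLeft, (3,1))] (by decide) (by decide) (by decide)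
  have hleft : TTileable (jaggedRect 6 3 {(2, 1)} {(0, 0), (3, 0), (5, 0)}) :=
    tTileable_of_placeShapes [(tRight, (0,0)), (tDown, (0,1)), (tUp, (3,1)), (tRight, (3,0)),
      (tUp, (5,1))] (by decide) (by decide) (by decide)
  have hrest := TTileable.prepend_jaggedRect_iterate (by norm_num) (by decide) (by decide)
    (by decide) hblock hcap k
  convert TTileable.prepend_jaggedRect (by decide) (by decide) ?_ ?_ hleft hrest using 2
  · congr 1
    ring
  · simp
  · simp only [mem_rectCells, Prod.mk_add_mk]
    omega
  · simp [Prod.ext_iff]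

lemma exists_tTileable_six_sdiff (n : ℕ) (hn : 3 ≤ n) (hodd : n % 2 = 1) :
    ∃ h₁ h₂ : ℤ × ℤ, h₁ ≠ h₂ ∧ {h₁, h₂} ⊆ rectCells 6 n ∧
      TTileable (rectCells 6 n \ {h₁, h₂}) := by
  rcases (by omega : n % 4 = 3 ∨ n % 4 = 1) with hn4 | hn4
  · obtain ⟨k, rfl⟩ : ∃ k, n = 4 * k + 3 := ⟨n / 4, by omega⟩
    refine ⟨(4, 0), (1, 4 * k + 2), by simp, ?_, tTileable_six_four_mul_add_three k⟩
    simp [insert_subset_iff]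
    omega
  · obtain ⟨k, rfl⟩ : ∃ k, n = 4 * k + 5 := ⟨n / 4 - 1, by omega⟩
    refine ⟨(2, 1), (2, 4 * k + 3), by simp; omega, ?_, tTileable_six_four_mul_add_five k⟩
    simp [insert_subset_iff]
    omega

/-- M(6,n) = 2 for odd n ≥ 3: every tiling of a 6×n rectangle uses at least 2
monominoes, and there is a tiling with exactly 2. -/
theorem gapNumber_six_odd (n : ℕ) (hn : 3 ≤ n) (hodd : n % 2 = 1) :
    (∀ P : Finset (Finset (ℤ × ℤ)),
      IsTiling P (rectCells 6 n) → 2 ≤ monoCount P) ∧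
    (∃ P : Finset (Finset (ℤ × ℤ)),
      IsTiling P (rectCells 6 n) ∧ monoCount P = 2) := by
  refine ⟨fun P hP => ?_, ?_⟩
  · have hmod := monoCount_mod_four hP
    rw [card_rectCells] at hmod
    omega
  · obtain ⟨h₁, h₂, hne, hsub, hT⟩ := exists_tTileable_six_sdiff n hn hodd
    rw [← card_pair hne]
    exact exists_isTiling_monoCount_eq_card hsub hT
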